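/- Let (P, L) be a Fischer space, M_α its Matsuo algebra over a field k with char(k) ≠ 2 and α ∉ {0,1}, U the group generated by t_x (x ∈ P) with relations t_x² = 1 and (t_x)^{t_y} = t_{τ_y(x)}. Given a k-vector space V and a group homomorphism ρ: U → GL(V), define an action of M_α on V by: v·x = 0 if ρ(t_x)(v) = v and v·x = αv if ρ(t_x)(v) = -v, extended linearly. Then V becomes an M_α-module: for every x ∈ P, V decomposes into eigenspaces V₀^x ⊕ V_α^x for the action of x, and the Jordan fusion rule Φ(α) is satisfied (V₀^x·A^x_{\{1,0\}} ⊆ V₀^x, V₀^x·A^x_α ⊆ V_α^x, V_α^x·A^x_{\{1,0\}} ⊆ V_α^x, V_α^x·A^x_α ⊆ V₀^x). -/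

import Mathlib

/-- A Fischer space on a point set `P`, encoded as a partial triple system
(`collinear` and the "third point" operation `wedge`) in which every map
`τ_x` (fixing `x` and non-collinear points and sending `y ∼ x` to `x∧y`)
is an automorphism of the geometry.  This is Buekenhout's characterization
of Fischer spaces. -/
structure FischerSpace (P : Type*) where
  collinear : P → P → Prop
  collinear_symm : ∀ {x y}, collinear x y → collinear y x
  collinear_irrefl : ∀ x, ¬ collinear x x
  wedge : P → P → P
  wedge_comm : ∀ {x y}, collinear x y → wedge x y = wedge y x
  collinear_wedge : ∀ {x y}, collinear x y → collinear x (wedge x y)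
  wedge_wedge : ∀ {x y}, collinear x y → wedge x (wedge x y) = y
  wedge_ne_left : ∀ {x y}, collinear x y → wedge x y ≠ x
  wedge_ne_right : ∀ {x y}, collinear x y → wedge x y ≠ y
  /-- the point permutation `τ_x` -/
  tau : P → P → P
  tau_of_collinear : ∀ {x y}, collinear x y → tau x y = wedge x y
  tau_of_not_collinear : ∀ {x y}, ¬ collinear x y → tau x y = y
  tau_hom_collinear : ∀ (x) {y z}, collinear y z → collinear (tau x y) (tau x z)
  tau_hom_wedge : ∀ (x) {y z}, collinear y z → tau x (wedge y z) = wedge (tau x y) (tau x z)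

namespace FischerSpace

variable {P : Type*} (F : FischerSpace P)

/-- `τ_x` is an involution. -/
theorem tau_involutive (x : P) : Function.Involutive (F.tau x) := by
  intro y
  by_cases h : F.collinear x y
  · rw [F.tau_of_collinear h, F.tau_of_collinear (F.collinear_wedge h), F.wedge_wedge h]
  · rw [F.tau_of_not_collinear h, F.tau_of_not_collinear h]

/-- `τ_x` as a permutation of the point set. -/
def tauPerm (x : P) : Equiv.Perm P := (F.tau_involutive x).toPerm

/-- A point is isolated if it is collinear with no other point. -/
def Isolated (x : P) : Prop := ∀ y, ¬ F.collinear x y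

open Finsupp in
/-- The product of two basis vectors of the Matsuo algebra `M_α`. -/
noncomputable def matsuoBasisMul {k : Type*} [Field k] (α : k) (x y : P) : P →₀ k :=
  open Classical in
  if x = y then Finsupp.single x 1
  else if F.collinear x y then
    (α / 2) • (Finsupp.single x 1 + Finsupp.single y 1 - Finsupp.single (F.wedge x y) 1)
  else 0

/-- The multiplication of the Matsuo algebra `M_α(P, L)`, as a bilinear map on the
free vector space on the point set. -/
noncomputable def matsuoMul (k : Type*) [Field k] (α : k) :
    (P →₀ k) →ₗ[k] (P →₀ k) →ₗ[k] (P →₀ k) :=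
  Finsupp.lsum k fun x =>
    LinearMap.toSpanSingleton k ((P →₀ k) →ₗ[k] (P →₀ k))
      (Finsupp.lsum k fun y => LinearMap.toSpanSingleton k (P →₀ k) (F.matsuoBasisMul α x y))

/-- The `φ`-eigenspace of (the multiplication operator by) the point `x` in the
Matsuo algebra `M_α`. -/
noncomputable def matsuoEig (k : Type*) [Field k] (α : k) (x : P) (φ : k) :
    Submodule k (P →₀ k) :=
  Module.End.eigenspace (F.matsuoMul k α (Finsupp.single x 1)) φ

end FischerSpace

/-- The relators of the universal group of a Fischer space: `t_x² = 1` and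
`t_y t_x t_y = t_{τ_y(x)}`. -/
def uRels {P : Type*} (F : FischerSpace P) : Set (FreeGroup P) :=
  (Set.range fun x : P => FreeGroup.of x * FreeGroup.of x) ∪
  (Set.range fun p : P × P =>
    FreeGroup.of p.2 * FreeGroup.of p.1 * FreeGroup.of p.2 *
      (FreeGroup.of (F.tau p.2 p.1))⁻¹)

/-- The generator `t_x` of the universal group of a Fischer space. -/
def tGen {P : Type*} (F : FischerSpace P) (x : P) : PresentedGroup (uRels F) :=
  PresentedGroup.of x


section Aux

open FischerSpace Finsupp

variable {P : Type*} (F : FischerSpace P)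

theorem uRel_sq (x : P) : tGen F x * tGen F x = 1 := by
  have h : (FreeGroup.of x * FreeGroup.of x) ∈ Subgroup.normalClosure (uRels F) :=
    Subgroup.subset_normalClosure (Or.inl ⟨x, rfl⟩)
  calc tGen F x * tGen F x
      = PresentedGroup.mk (uRels F) (FreeGroup.of x * FreeGroup.of x) := by
        rw [map_mul]; rfl
    _ = 1 := (QuotientGroup.eq_one_iff _).mpr h

theorem uRel_conj (x y : P) :
    tGen F x * tGen F y * tGen F x = tGen F (F.tau x y) := by
  have h : (FreeGroup.of x * FreeGroup.of y * FreeGroup.of x *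
      (FreeGroup.of (F.tau x y))⁻¹) ∈ Subgroup.normalClosure (uRels F) :=
    Subgroup.subset_normalClosure (Or.inr ⟨(y, x), rfl⟩)
  have h1 : PresentedGroup.mk (uRels F) (FreeGroup.of x * FreeGroup.of y * FreeGroup.of x *
      (FreeGroup.of (F.tau x y))⁻¹) = 1 := (QuotientGroup.eq_one_iff _).mpr h
  have h2 : tGen F x * tGen F y * tGen F x * (tGen F (F.tau x y))⁻¹ = 1 := by
    rw [← h1]; simp only [map_mul, map_inv]; rfl
  have := mul_eq_one_iff_eq_inv.mp h2
  rwa [inv_inv] at this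

theorem matsuoMul_single {k : Type*} [Field k] (α : k) (x y : P) :
    F.matsuoMul k α (Finsupp.single x 1) (Finsupp.single y 1) = F.matsuoBasisMul α x y := by
  simp [FischerSpace.matsuoMul, Finsupp.lsum_single, LinearMap.toSpanSingleton_apply_one]

theorem tau_lmap_eq {k : Type*} [Field k]
    (hchar : (2 : k) ≠ 0) (α : k) (x : P) :
    (α * (α - 1)) • Finsupp.lmapDomain k k (F.tau x) =
      (α * (α - 1)) • (LinearMap.id : (P →₀ k) →ₗ[k] (P →₀ k)) -
      (2 : k) •
        ((F.matsuoMul k α (Finsupp.single x 1)) ∘ₗ (F.matsuoMul k α (Finsupp.single x 1)) -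
          F.matsuoMul k α (Finsupp.single x 1)) := by
  apply Finsupp.lhom_ext
  intro y b
  have hb : (Finsupp.single y b : P →₀ k) = b • Finsupp.single y 1 := by
    rw [Finsupp.smul_single', mul_one]
  rw [hb, map_smul, map_smul]
  congr 1
  simp only [LinearMap.sub_apply, LinearMap.smul_apply, LinearMap.comp_apply,
    LinearMap.id_apply, Finsupp.lmapDomain_apply, Finsupp.mapDomain_single]
  by_cases hxy : x = y
  · subst hxy
    rw [F.tau_of_not_collinear (F.collinear_irrefl x)]
    rw [matsuoMul_single, show F.matsuoBasisMul α x x = Finsupp.single x 1 by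
      simp [FischerSpace.matsuoBasisMul]]
    rw [matsuoMul_single, show F.matsuoBasisMul α x x = Finsupp.single x 1 by
      simp [FischerSpace.matsuoBasisMul]]
    simp
  · by_cases hc : F.collinear x y
    · set w := F.wedge x y with hw
      have hcw : F.collinear x w := F.collinear_wedge hc
      have hwx : w ≠ x := F.wedge_ne_left hc
      have hxw : x ≠ w := fun h => hwx h.symm
      have hww : F.wedge x w = y := F.wedge_wedge hc
      have hLy : F.matsuoMul k α (Finsupp.single x 1) (Finsupp.single y 1) =
          (α / 2) • (Finsupp.single x 1 + Finsupp.single y 1 - Finsupp.single w 1) := by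
        rw [matsuoMul_single]
        simp [FischerSpace.matsuoBasisMul, hxy, hc, hw]
      have hLw : F.matsuoMul k α (Finsupp.single x 1) (Finsupp.single w 1) =
          (α / 2) • (Finsupp.single x 1 + Finsupp.single w 1 - Finsupp.single y 1) := by
        rw [matsuoMul_single]
        simp [FischerSpace.matsuoBasisMul, hxw, hcw, hww]
      have hLx : F.matsuoMul k α (Finsupp.single x 1) (Finsupp.single x 1) =
          Finsupp.single x 1 := by
        rw [matsuoMul_single]; simp [FischerSpace.matsuoBasisMul]
      rw [F.tau_of_collinear hc, ← hw, hLy, map_smul, map_sub, map_add, hLx, hLy, hLw]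
      match_scalars <;> field_simp <;> ring
    · have hLy : F.matsuoMul k α (Finsupp.single x 1) (Finsupp.single y 1) = 0 := by
        rw [matsuoMul_single]; simp [FischerSpace.matsuoBasisMul, hxy, hc]
      rw [F.tau_of_not_collinear hc, hLy]
      simp

end Aux

open Classical in
/-- Theorem 5.1: a linear representation `ρ` of the universal group `U` of
a Fischer space gives a module over the Matsuo algebra `M_α` via `v·x = 0` or `αv`
according as `ρ(t_x)v = v` or `ρ(t_x)v = -v`: the space decomposes into eigenspaces
`V₀ ⊕ V_α` for each point `x` and the Jordan fusion rule `Φ(α)` holds. -/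
theorem stmt16 {P : Type*} (F : FischerSpace P)
    {k : Type*} [Field k] (hchar : (2 : k) ≠ 0) (α : k) (hα0 : α ≠ 0) (hα1 : α ≠ 1)
    {V : Type*} [AddCommGroup V] [Module k V]
    (ρ : PresentedGroup (uRels F) →* (V ≃ₗ[k] V))
    (act : V →ₗ[k] (P →₀ k) →ₗ[k] V)
    (hact0 : ∀ (x : P) (v : V), ρ (tGen F x) v = v → act v (Finsupp.single x 1) = 0)
    (hactα : ∀ (x : P) (v : V), ρ (tGen F x) v = -v → act v (Finsupp.single x 1) = α • v) :
    ∀ x : P,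
      DirectSum.IsInternal (fun i : Fin 2 =>
        ![Module.End.eigenspace (act.flip (Finsupp.single x 1)) 0,
          Module.End.eigenspace (act.flip (Finsupp.single x 1)) α] i) ∧
      (∀ v ∈ Module.End.eigenspace (act.flip (Finsupp.single x 1)) 0,
        (∀ a ∈ F.matsuoEig k α x 1 ⊔ F.matsuoEig k α x 0,
          act v a ∈ Module.End.eigenspace (act.flip (Finsupp.single x 1)) 0) ∧
        (∀ a ∈ F.matsuoEig k α x α,
          act v a ∈ Module.End.eigenspace (act.flip (Finsupp.single x 1)) α)) ∧
      (∀ v ∈ Module.End.eigenspace (act.flip (Finsupp.single x 1)) α,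
        (∀ a ∈ F.matsuoEig k α x 1 ⊔ F.matsuoEig k α x 0,
          act v a ∈ Module.End.eigenspace (act.flip (Finsupp.single x 1)) α) ∧
        (∀ a ∈ F.matsuoEig k α x α,
          act v a ∈ Module.End.eigenspace (act.flip (Finsupp.single x 1)) 0)) := by
  classical
  have hchar' : (2⁻¹ : k) ≠ 0 := inv_ne_zero hchar
  have hαα : α * (α - 1) ≠ 0 := mul_ne_zero hα0 (sub_ne_zero.mpr hα1)
  have hinv : ∀ (y : P) (v : V), ρ (tGen F y) (ρ (tGen F y) v) = v := by
    intro y v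
    have h : ρ (tGen F y) * ρ (tGen F y) = 1 := by
      rw [← map_mul, uRel_sq, map_one]
    calc ρ (tGen F y) (ρ (tGen F y) v) = (ρ (tGen F y) * ρ (tGen F y)) v := rfl
      _ = v := by rw [h]; rfl
  have hplus : ∀ (y : P) (v : V),
      ρ (tGen F y) ((2⁻¹ : k) • (v + ρ (tGen F y) v)) = (2⁻¹ : k) • (v + ρ (tGen F y) v) := by
    intro y v
    rw [map_smul, map_add, hinv, add_comm]
  have hminus : ∀ (y : P) (v : V),
      ρ (tGen F y) ((2⁻¹ : k) • (v - ρ (tGen F y) v)) = -((2⁻¹ : k) • (v - ρ (tGen F y) v)) := by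
    intro y v
    rw [map_smul, map_sub, hinv, ← smul_neg, neg_sub]
  have hdecomp : ∀ (y : P) (v : V),
      v = (2⁻¹ : k) • (v + ρ (tGen F y) v) + (2⁻¹ : k) • (v - ρ (tGen F y) v) := by
    intro y v
    match_scalars <;> (field_simp; try norm_num)
  have hS : ∀ (y : P) (v : V),
      act v (Finsupp.single y 1) = α • ((2⁻¹ : k) • (v - ρ (tGen F y) v)) := by
    intro y v
    calc act v (Finsupp.single y 1)
        = act ((2⁻¹ : k) • (v + ρ (tGen F y) v)) (Finsupp.single y 1)
          + act ((2⁻¹ : k) • (v - ρ (tGen F y) v)) (Finsupp.single y 1) := by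
          rw [← LinearMap.add_apply, ← map_add, ← hdecomp y v]
      _ = 0 + α • ((2⁻¹ : k) • (v - ρ (tGen F y) v)) := by
          rw [hact0 y _ (hplus y v), hactα y _ (hminus y v)]
      _ = α • ((2⁻¹ : k) • (v - ρ (tGen F y) v)) := zero_add _
  intro x
  have hSv : ∀ v : V, act.flip (Finsupp.single x 1) v
      = α • ((2⁻¹ : k) • (v - ρ (tGen F x) v)) := by
    intro v
    rw [LinearMap.flip_apply]
    exact hS x v
  have hmem0 : ∀ v : V,
      v ∈ Module.End.eigenspace (act.flip (Finsupp.single x 1)) 0 ↔ ρ (tGen F x) v = v := by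
    intro v
    rw [Module.End.mem_eigenspace_iff, zero_smul, hSv v]
    constructor
    · intro h
      have h2 : (2⁻¹ : k) • (v - ρ (tGen F x) v) = 0 :=
        (smul_eq_zero.mp h).resolve_left hα0
      have h3 : v - ρ (tGen F x) v = 0 := (smul_eq_zero.mp h2).resolve_left hchar'
      exact (sub_eq_zero.mp h3).symm
    · intro h
      rw [h, sub_self, smul_zero, smul_zero]
  have hmemα : ∀ v : V,
      v ∈ Module.End.eigenspace (act.flip (Finsupp.single x 1)) α ↔ ρ (tGen F x) v = -v := by
    intro v
    rw [Module.End.mem_eigenspace_iff, hSv v]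
    constructor
    · intro h
      have h1 : (2⁻¹ : k) • (v - ρ (tGen F x) v) = v := smul_right_injective V hα0 h
      have h2 := hminus x v
      rw [h1] at h2
      exact h2
    · intro h
      rw [h, sub_neg_eq_add]
      match_scalars
      field_simp
      norm_num
  have hcomm : ∀ (v : V) (ε : k), ρ (tGen F x) v = ε • v →
      ∀ a : P →₀ k, ρ (tGen F x) (act v a)
        = ε • act v (Finsupp.lmapDomain k k (F.tau x) a) := by
    intro v ε hv a
    induction a using Finsupp.induction_linear with
    | zero => simp
    | add f g hf hg => simp only [map_add, hf, hg, smul_add]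
    | single y c =>
      have hy : (Finsupp.single y c : P →₀ k) = c • Finsupp.single y 1 := by
        rw [Finsupp.smul_single', mul_one]
      rw [hy]
      simp only [map_smul]
      rw [smul_comm ε c]
      congr 1
      rw [Finsupp.lmapDomain_apply, Finsupp.mapDomain_single]
      rw [hS y v, hS (F.tau x y) v]
      have hrel : ρ (tGen F x) (ρ (tGen F y) v) = ρ (tGen F (F.tau x y)) (ρ (tGen F x) v) := by
        have h := uRel_conj F x y
        have h2 : tGen F x * tGen F y = tGen F (F.tau x y) * tGen F x := by
          calc tGen F x * tGen F y = tGen F x * tGen F y * tGen F x * tGen F x := by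
                rw [mul_assoc _ (tGen F x) (tGen F x), uRel_sq, mul_one]
            _ = tGen F (F.tau x y) * tGen F x := by rw [h]
        calc ρ (tGen F x) (ρ (tGen F y) v) = ρ (tGen F x * tGen F y) v := by
              rw [map_mul]; rfl
          _ = ρ (tGen F (F.tau x y) * tGen F x) v := by rw [h2]
          _ = ρ (tGen F (F.tau x y)) (ρ (tGen F x) v) := by rw [map_mul]; rfl
      rw [map_smul, map_smul, map_sub, hrel, hv, map_smul]
      match_scalars <;> ring
  have hσ0 : ∀ a ∈ F.matsuoEig k α x 1 ⊔ F.matsuoEig k α x 0,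
      Finsupp.lmapDomain k k (F.tau x) a = a := by
    intro a ha
    obtain ⟨b, hb, c, hc, rfl⟩ := Submodule.mem_sup.mp ha
    simp only [FischerSpace.matsuoEig, Module.End.mem_eigenspace_iff] at hb hc
    rw [one_smul] at hb
    rw [zero_smul] at hc
    have happ := LinearMap.congr_fun (tau_lmap_eq F hchar α x) (b + c)
    simp only [LinearMap.smul_apply, LinearMap.sub_apply, LinearMap.comp_apply,
      LinearMap.id_apply, map_add, hb, hc, map_zero, add_zero, sub_self, smul_zero,
      sub_zero] at happ
    have h2 : (α * (α - 1)) • (Finsupp.lmapDomain k k (F.tau x)) (b + c)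
        = (α * (α - 1)) • (b + c) := by
      rw [map_add, smul_add, smul_add]
      exact happ
    exact smul_right_injective _ hαα h2
  have hσα : ∀ a ∈ F.matsuoEig k α x α,
      Finsupp.lmapDomain k k (F.tau x) a = -a := by
    intro a ha
    simp only [FischerSpace.matsuoEig, Module.End.mem_eigenspace_iff] at ha
    have happ := LinearMap.congr_fun (tau_lmap_eq F hchar α x) a
    simp only [LinearMap.smul_apply, LinearMap.sub_apply, LinearMap.comp_apply,
      LinearMap.id_apply, ha, map_smul] at happ
    have h2 : (α * (α - 1)) • Finsupp.lmapDomain k k (F.tau x) a = (α * (α - 1)) • (-a) := by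
      rw [happ]
      match_scalars
      ring
    exact smul_right_injective _ hαα h2
  refine ⟨?_, ?_, ?_⟩
  · rw [DirectSum.isInternal_submodule_iff_isCompl _ (show (0 : Fin 2) ≠ 1 by decide)
      (by ext i; fin_cases i <;> simp)]
    simp only [Matrix.cons_val_zero, Matrix.cons_val_one, Matrix.head_cons]
    constructor
    · rw [Submodule.disjoint_def]
      intro v hv0 hvα
      have h1 := (hmem0 v).mp hv0
      have h2 := (hmemα v).mp hvα
      rw [h1] at h2
      have h3 : (2 : k) • v = 0 := by
        rw [two_smul]
        exact eq_neg_iff_add_eq_zero.mp h2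
      exact (smul_eq_zero.mp h3).resolve_left hchar
    · rw [codisjoint_iff, eq_top_iff]
      intro v _
      have hmem := Submodule.add_mem_sup ((hmem0 _).mpr (hplus x v)) ((hmemα _).mpr (hminus x v))
      rwa [← hdecomp x v] at hmem
  · intro v hv
    have hρv : ρ (tGen F x) v = (1 : k) • v := by
      rw [one_smul]; exact (hmem0 v).mp hv
    constructor
    · intro a ha
      rw [hmem0, hcomm v 1 hρv a, hσ0 a ha, one_smul]
    · intro a ha
      rw [hmemα, hcomm v 1 hρv a, hσα a ha, one_smul, map_neg]
  · intro v hv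
    have hρv : ρ (tGen F x) v = (-1 : k) • v := by
      rw [neg_smul, one_smul]; exact (hmemα v).mp hv
    constructor
    · intro a ha
      rw [hmemα, hcomm v (-1) hρv a, hσ0 a ha, neg_smul, one_smul]
    · intro a ha
      rw [hmem0, hcomm v (-1) hρv a, hσα a ha, map_neg, neg_smul, one_smul, neg_neg]
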